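/- Fix d ≥ 1 and define L₀ : ℝ^d → ℝ̄ by L₀(x) = sup_{y ∈ ℝ^d} ( ⟨x,y⟩ − max_{l ∈ {0,1,…,d}} ( ‖y‖_(l) − l ) ). Then for every x ∈ ℝ^d, L₀(x) equals the minimum of Σ_{l=1}^{d} l · ‖x^{(l)}‖^sp_(l) over all d-tuples (x^{(1)},…,x^{(d)}) of vectors of ℝ^d satisfying Σ_{l=1}^{d} ‖x^{(l)}‖^sp_(l) ≤ 1 and Σ_{l=1}^{d} x^{(l)} = x (the minimum being +∞ when no such tuple exists, and attained otherwise). -/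

import Mathlib

/-!
`L0` is the Fenchel conjugate of `c(y) = max_l (‖y‖_(l) - l)`. Weak duality: since
`⟨x⁽ˡ⁾, y⟩ ≤ ‖y‖_(l) ‖x⁽ˡ⁾‖^sp_(l) ≤ (c(y) + l) ‖x⁽ˡ⁾‖^sp_(l)` and `c ≥ 0`, every feasible tuple
bounds `L0 x` from above. Conversely `c(y)` is attained by a tuple with the single nonzero entry
`y_K / ‖y_K‖` (for `K` realising `‖y‖_(l)`), so `c` is the support function of the closed convex set
`{(∑ x⁽ˡ⁾, r) | ∑ ‖x⁽ˡ⁾‖^sp_(l) ≤ 1, ∑ l ‖x⁽ˡ⁾‖^sp_(l) ≤ r}`; separating `(x, m)` from it, for `m`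
below the minimum, gives strong duality. Feasible tuples exist iff `‖x‖ ≤ 1`, since
`‖·‖ ≤ ‖·‖^sp_(l)` with equality for `l = d`; the minimum is then attained by compactness, and for
`‖x‖ > 1` the ray `y = n x` sends `L0 x` to `+∞`.
-/

noncomputable section

variable {d : ℕ}

/-- The projection `x_K` of `x` onto the coordinates in `K`
(the components outside `K` vanish). -/
def restr (K : Finset (Fin d)) (x : EuclideanSpace ℝ (Fin d)) : EuclideanSpace ℝ (Fin d) :=
  WithLp.toLp 2 (fun i => if i ∈ K then x i else 0)

/-- The 2-k-symmetric gauge norm `‖y‖_(k) = sup {‖y_K‖ : |K| ≤ k}`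
(equal to `0` for `k = 0`, by the convention `‖·‖_(0) = 0`). -/
def gaugeNorm (k : ℕ) (y : EuclideanSpace ℝ (Fin d)) : ℝ :=
  ⨆ K : {K : Finset (Fin d) // K.card ≤ k}, ‖restr (K : Finset (Fin d)) y‖

/-- The ℓ₀ pseudonorm: the number of nonzero components. -/
def l0 (x : EuclideanSpace ℝ (Fin d)) : ℕ :=
  (Finset.univ.filter fun i => x i ≠ 0).card

open Classical in
/-- The Capra coupling `¢(x,y) = ⟨x,y⟩ / ‖x‖` for `x ≠ 0`, and `¢(0,y) = 0`. -/
def capra (x y : EuclideanSpace ℝ (Fin d)) : ℝ :=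
  if x = 0 then 0 else (inner ℝ x y : ℝ) / ‖x‖

/-- The Capra conjugate of ℓ₀: `y ↦ max_{0 ≤ l ≤ d} (‖y‖_(l) − l)`. -/
def capraConjL0 (y : EuclideanSpace ℝ (Fin d)) : ℝ :=
  ⨆ l : Fin (d + 1), (gaugeNorm (l : ℕ) y - ((l : ℕ) : ℝ))

/-- `L₀(x) = sup_y (⟨x,y⟩ − max_{0 ≤ l ≤ d}(‖y‖_(l) − l))`, with values in `ℝ̄ = EReal`. -/
def L0 (x : EuclideanSpace ℝ (Fin d)) : EReal :=
  ⨆ y : EuclideanSpace ℝ (Fin d), (((inner ℝ x y : ℝ) - capraConjL0 y : ℝ) : EReal)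

/-- The k-support norm: the dual norm of the 2-k-symmetric gauge norm,
`‖y‖^sp_(k) = sup {⟨x,y⟩ : ‖x‖_(k) ≤ 1}`. -/
def suppNorm (k : ℕ) (y : EuclideanSpace ℝ (Fin d)) : ℝ :=
  sSup {c : ℝ | ∃ x : EuclideanSpace ℝ (Fin d), gaugeNorm k x ≤ 1 ∧ c = (inner ℝ x y : ℝ)}

/-- The unit ball of the k-support norm, with the convention `B^sp_(0) = {0}`. -/
def Bsp (d k : ℕ) : Set (EuclideanSpace ℝ (Fin d)) :=
  if k = 0 then {0} else {y | suppNorm k y ≤ 1}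

/-- The degenerate unit sphere `S_K = {x : x_{−K} = 0 and ‖x_K‖ = 1}`. -/
def sphK (K : Finset (Fin d)) : Set (EuclideanSpace ℝ (Fin d)) :=
  {x | (∀ i, i ∉ K → x i = 0) ∧ ‖restr K x‖ = 1}

/-- The degenerate unit ball `B_K = {x : x_{−K} = 0 and ‖x_K‖ ≤ 1}`. -/
def ballK (K : Finset (Fin d)) : Set (EuclideanSpace ℝ (Fin d)) :=
  {x | (∀ i, i ∉ K → x i = 0) ∧ ‖restr K x‖ ≤ 1}

/-- A tuple `(x^{(1)},…,x^{(d)})` (indexed here by `l : Fin d`, with `t l = x^{(l+1)}`)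
is feasible for `x` if `Σ_{l=1}^{d} ‖x^{(l)}‖^sp_(l) ≤ 1` and `Σ_{l=1}^{d} x^{(l)} = x`. -/
def Feasible (d : ℕ) (x : EuclideanSpace ℝ (Fin d))
    (t : Fin d → EuclideanSpace ℝ (Fin d)) : Prop :=
  (∑ l : Fin d, suppNorm ((l : ℕ) + 1) (t l)) ≤ 1 ∧ (∑ l : Fin d, t l) = x

/-- The objective value `Σ_{l=1}^{d} l · ‖x^{(l)}‖^sp_(l)` of a tuple. -/
def tupleVal (d : ℕ) (t : Fin d → EuclideanSpace ℝ (Fin d)) : ℝ :=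
  ∑ l : Fin d, (((l : ℕ) + 1 : ℝ)) * suppNorm ((l : ℕ) + 1) (t l)

open Set
open scoped Pointwise RealInnerProductSpace

/-- The epigraph of the infimal projection `z ↦ inf {g t | t ∈ A, L t = z}`. -/
def projEpigraph {α F : Type*} (A : Set α) (L : α → F) (g : α → ℝ) : Set (F × ℝ) :=
  {p | ∃ t ∈ A, L t = p.1 ∧ g t ≤ p.2}

theorem convex_projEpigraph {α F : Type*} [AddCommGroup α] [Module ℝ α] [AddCommGroup F]
    [Module ℝ F] {A : Set α} {g : α → ℝ} (hA : Convex ℝ A) (L : α →ₗ[ℝ] F)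
    (hg : ConvexOn ℝ A g) : Convex ℝ (projEpigraph A L g) := by
  rintro ⟨_, r⟩ ⟨t, ht, rfl, hgt⟩ ⟨_, s⟩ ⟨t', ht', rfl, hgt'⟩ a b ha hb hab
  refine ⟨a • t + b • t', hA ht ht' ha hb hab, by simp, ?_⟩
  calc g (a • t + b • t') ≤ a * g t + b * g t' := hg.2 ht ht' ha hb hab
    _ ≤ a * r + b * s := by gcongr
    _ = _ := rfl

theorem projEpigraph_eq_image_add {α F : Type*} [AddCommGroup F] (A : Set α) (L : α → F)
    (g : α → ℝ) :
    projEpigraph A L g = (fun t => (L t, g t)) '' A + ({(0 : F)} ×ˢ Ici (0 : ℝ)) := by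
  ext ⟨z, r⟩
  constructor
  · rintro ⟨t, ht, rfl, hgt⟩
    exact ⟨_, ⟨t, ht, rfl⟩, (0, r - g t), ⟨rfl, sub_nonneg.2 hgt⟩, by simp⟩
  · rintro ⟨_, ⟨t, ht, rfl⟩, ⟨_, s⟩, ⟨rfl, hs⟩, h⟩
    simp only [Prod.mk_add_mk, add_zero, Prod.mk.injEq] at h
    exact ⟨t, ht, h.1, by simp only [mem_Ici] at hs; linarith⟩

theorem isClosed_projEpigraph {α F : Type*} [TopologicalSpace α] [AddCommGroup F]
    [TopologicalSpace F] [IsTopologicalAddGroup F] [T1Space F] {A : Set α} {L : α → F} {g : α → ℝ}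
    (hA : IsCompact A) (hL : Continuous L) (hg : ContinuousOn g A) :
    IsClosed (projEpigraph A L g) := by
  rw [projEpigraph_eq_image_add]
  exact (isClosed_singleton.prod isClosed_Ici).add_left_of_isCompact
    (hA.image_of_continuousOn (hL.continuousOn.prodMk hg))

theorem exists_inner_sub_lt_of_notMem {E : Type*} [NormedAddCommGroup E] [InnerProductSpace ℝ E]
    [CompleteSpace E] {C : Set (E × ℝ)} (hC : Convex ℝ C) (hCc : IsClosed C) {x : E} {m r : ℝ}
    (hm : (x, m) ∉ C) (hr : (x, r) ∈ C) (hmr : m < r) :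
    ∃ y : E, ∀ p ∈ C, ⟪p.1, y⟫ - p.2 < ⟪x, y⟫ - m := by
  obtain ⟨f, u, hfx, hfC⟩ := geometric_hahn_banach_point_closed hC hCc hm
  set w := (InnerProductSpace.toDual ℝ E).symm (f.comp (.inl ℝ E ℝ))
  set β := f (0, 1)
  have hf : ∀ p : E × ℝ, f p = ⟪w, p.1⟫ + p.2 * β := by
    rintro ⟨z, s⟩
    have : ((z, s) : E × ℝ) = (z, 0) + s • (0, 1) := by ext <;> simp
    rw [this, map_add, map_smul, InnerProductSpace.toDual_symm_apply]
    simp [β]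
  -- `(x, r) ∈ C` with `m < r` makes the separating hyperplane non-vertical.
  have hβ : 0 < β := by
    have := hfx.trans (hfC _ hr)
    rw [hf, hf] at this
    nlinarith
  have hscale : ∀ a s : ℝ, β⁻¹ * (a + s * β) = β⁻¹ * a + s := fun a s => by field_simp
  refine ⟨-β⁻¹ • w, fun p hp => ?_⟩
  have hsep := mul_lt_mul_of_pos_left (hfx.trans (hfC p hp)) (inv_pos.2 hβ)
  rw [hf, hf, hscale, hscale] at hsep
  simp only [real_inner_smul_right, real_inner_comm w]
  linarith

theorem convexOn_univ_sum_apply {ι E : Type*} [Fintype ι] [AddCommGroup E] [Module ℝ E]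
    {f : ι → E → ℝ} (hf : ∀ i, ConvexOn ℝ univ (f i)) :
    ConvexOn ℝ univ (fun t : ι → E => ∑ i, f i (t i)) := by
  refine ⟨convex_univ, fun t _ s _ a b ha hb hab => ?_⟩
  calc ∑ i, f i (a • t i + b • s i) ≤ ∑ i, (a * f i (t i) + b * f i (s i)) :=
        Finset.sum_le_sum fun i _ => (hf i).2 trivial trivial ha hb hab
    _ = a * ∑ i, f i (t i) + b * ∑ i, f i (s i) := by
        rw [Finset.sum_add_distrib, Finset.mul_sum, Finset.mul_sum]

section Restriction

variable (K : Finset (Fin d)) (x y : EuclideanSpace ℝ (Fin d))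

@[simp]
theorem restr_apply (i : Fin d) : restr K x i = if i ∈ K then x i else 0 := rfl

theorem restr_smul (c : ℝ) : restr K (c • x) = c • restr K x := by
  ext i
  by_cases hi : i ∈ K <;> simp [hi]

theorem restr_restr : restr K (restr K x) = restr K x := by
  ext i
  by_cases hi : i ∈ K <;> simp [hi]

theorem restr_univ : restr Finset.univ x = x := by
  ext i
  simp

theorem inner_restr_left : ⟪restr K x, y⟫ = ⟪x, restr K y⟫ := by
  simp only [PiLp.inner_apply]
  refine Finset.sum_congr rfl fun i _ => ?_
  by_cases hi : i ∈ K <;> simp [hi]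

theorem inner_restr_self : ⟪x, restr K x⟫ = ‖restr K x‖ ^ 2 := by
  rw [← real_inner_self_eq_norm_sq, inner_restr_left, restr_restr]

theorem norm_restr_le : ‖restr K x‖ ≤ ‖x‖ := by
  have := (inner_restr_self K x).symm.trans_le (real_inner_le_norm x (restr K x))
  nlinarith [norm_nonneg (restr K x), norm_nonneg x]

theorem norm_restr_singleton (i : Fin d) : ‖restr {i} x‖ = |x i| := by
  rw [EuclideanSpace.norm_eq]
  simp [apply_ite, Real.sqrt_sq_eq_abs]

end Restriction

section GaugeNorm

variable {k : ℕ} (y : EuclideanSpace ℝ (Fin d))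

instance (k : ℕ) : Nonempty {K : Finset (Fin d) // K.card ≤ k} := ⟨⟨∅, by simp⟩⟩

theorem norm_restr_le_gaugeNorm {K : Finset (Fin d)} (hK : K.card ≤ k) :
    ‖restr K y‖ ≤ gaugeNorm k y :=
  le_ciSup (f := fun K : {K : Finset (Fin d) // K.card ≤ k} => ‖restr (K : Finset (Fin d)) y‖)
    (Set.finite_range _).bddAbove ⟨K, hK⟩

theorem gaugeNorm_le {c : ℝ} (h : ∀ K : Finset (Fin d), K.card ≤ k → ‖restr K y‖ ≤ c) :
    gaugeNorm k y ≤ c :=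
  ciSup_le fun K => h K K.2

theorem exists_norm_restr_eq_gaugeNorm :
    ∃ K : Finset (Fin d), K.card ≤ k ∧ ‖restr K y‖ = gaugeNorm k y := by
  obtain ⟨K, hK⟩ := exists_eq_ciSup_of_finite
    (f := fun K : {K : Finset (Fin d) // K.card ≤ k} => ‖restr (K : Finset (Fin d)) y‖)
  exact ⟨K, K.2, hK⟩

theorem gaugeNorm_nonneg : 0 ≤ gaugeNorm k y :=
  (norm_nonneg _).trans (norm_restr_le_gaugeNorm y (K := ∅) (by simp))

theorem gaugeNorm_le_norm : gaugeNorm k y ≤ ‖y‖ :=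
  gaugeNorm_le y fun K _ => norm_restr_le K y

theorem gaugeNorm_zero_left : gaugeNorm 0 y = 0 := by
  refine le_antisymm (gaugeNorm_le y fun K hK => ?_) (gaugeNorm_nonneg y)
  have : restr K y = 0 := by
    ext i
    simp [Finset.card_eq_zero.1 (Nat.le_zero.1 hK)]
  simp [this]

theorem abs_apply_le_gaugeNorm (hk : 0 < k) (i : Fin d) : |y i| ≤ gaugeNorm k y :=
  norm_restr_singleton y i ▸ norm_restr_le_gaugeNorm y (Finset.card_singleton i ▸ hk)

theorem gaugeNorm_smul (c : ℝ) : gaugeNorm k (c • y) = |c| * gaugeNorm k y := by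
  simp only [gaugeNorm, restr_smul, norm_smul, Real.norm_eq_abs,
    Real.mul_iSup_of_nonneg (abs_nonneg c)]

theorem gaugeNorm_zero_right : gaugeNorm k (0 : EuclideanSpace ℝ (Fin d)) = 0 := by
  simpa using gaugeNorm_smul (k := k) (0 : EuclideanSpace ℝ (Fin d)) 0

end GaugeNorm

section SuppNorm

variable {k : ℕ} (y : EuclideanSpace ℝ (Fin d))

theorem bddAbove_inner_gaugeNorm_le_one (hk : 0 < k) :
    BddAbove {c : ℝ | ∃ z : EuclideanSpace ℝ (Fin d), gaugeNorm k z ≤ 1 ∧ c = ⟪z, y⟫} := by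
  refine ⟨∑ i, |y i|, ?_⟩
  rintro _ ⟨z, hz, rfl⟩
  rw [PiLp.inner_apply]
  refine Finset.sum_le_sum fun i _ => ?_
  have hzi := (abs_apply_le_gaugeNorm z hk i).trans hz
  calc ⟪z i, y i⟫ ≤ |y i * z i| := le_abs_self _
    _ = |y i| * |z i| := abs_mul _ _
    _ ≤ |y i| := mul_le_of_le_one_right (abs_nonneg _) hzi

theorem inner_le_suppNorm (hk : 0 < k) {z : EuclideanSpace ℝ (Fin d)} (hz : gaugeNorm k z ≤ 1) :
    ⟪z, y⟫ ≤ suppNorm k y :=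
  le_csSup (bddAbove_inner_gaugeNorm_le_one y hk) ⟨z, hz, rfl⟩

theorem suppNorm_le {c : ℝ} (h : ∀ z, gaugeNorm k z ≤ 1 → ⟪z, y⟫ ≤ c) : suppNorm k y ≤ c := by
  refine csSup_le ⟨0, 0, by simp [gaugeNorm_zero_right], by simp⟩ ?_
  rintro _ ⟨z, hz, rfl⟩
  exact h z hz

theorem suppNorm_nonneg (hk : 0 < k) : 0 ≤ suppNorm k y := by
  simpa using inner_le_suppNorm y hk (z := 0) (by simp [gaugeNorm_zero_right])

theorem suppNorm_zero (hk : 0 < k) : suppNorm k (0 : EuclideanSpace ℝ (Fin d)) = 0 :=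
  le_antisymm (suppNorm_le _ fun z _ => by simp) (suppNorm_nonneg _ hk)

theorem inner_le_gaugeNorm_mul_suppNorm (hk : 0 < k) (z : EuclideanSpace ℝ (Fin d)) :
    ⟪z, y⟫ ≤ gaugeNorm k z * suppNorm k y := by
  rcases (gaugeNorm_nonneg (k := k) z).eq_or_lt with h0 | hpos
  · have hz : z = 0 := by
      ext i
      simpa [← h0] using abs_apply_le_gaugeNorm z hk i
    simp [hz, gaugeNorm_zero_right]
  · have hunit : gaugeNorm k ((gaugeNorm k z)⁻¹ • z) ≤ 1 := by
      rw [gaugeNorm_smul, abs_of_pos (inv_pos.2 hpos), inv_mul_cancel₀ hpos.ne']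
    have := inner_le_suppNorm y hk hunit
    rwa [real_inner_smul_left, inv_mul_le_iff₀ hpos] at this

theorem norm_le_suppNorm (hk : 0 < k) : ‖y‖ ≤ suppNorm k y := by
  have h := (real_inner_self_eq_norm_sq y).symm.trans_le
    ((inner_le_gaugeNorm_mul_suppNorm y hk y).trans
      (mul_le_mul_of_nonneg_right (gaugeNorm_le_norm y) (suppNorm_nonneg y hk)))
  nlinarith [norm_nonneg y, suppNorm_nonneg y hk]

theorem convexOn_suppNorm (hk : 0 < k) :
    ConvexOn ℝ univ (suppNorm k : EuclideanSpace ℝ (Fin d) → ℝ) := by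
  refine ⟨convex_univ, fun u _ v _ a b ha hb _ => suppNorm_le _ fun z hz => ?_⟩
  rw [inner_add_right, real_inner_smul_right, real_inner_smul_right]
  exact add_le_add (mul_le_mul_of_nonneg_left (inner_le_suppNorm u hk hz) ha)
    (mul_le_mul_of_nonneg_left (inner_le_suppNorm v hk hz) hb)

theorem continuous_suppNorm (hk : 0 < k) :
    Continuous (suppNorm k : EuclideanSpace ℝ (Fin d) → ℝ) :=
  continuousOn_univ.1 ((convexOn_suppNorm hk).continuousOn isOpen_univ)

theorem suppNorm_le_norm_of_restr_eq {K : Finset (Fin d)} (hK : K.card ≤ k)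
    {v : EuclideanSpace ℝ (Fin d)} (hv : restr K v = v) : suppNorm k v ≤ ‖v‖ := by
  refine suppNorm_le v fun z hz => ?_
  calc ⟪z, v⟫ = ⟪restr K z, v⟫ := by rw [inner_restr_left, hv]
    _ ≤ ‖restr K z‖ * ‖v‖ := real_inner_le_norm _ _
    _ ≤ 1 * ‖v‖ := by gcongr; exact (norm_restr_le_gaugeNorm z hK).trans hz
    _ = ‖v‖ := one_mul _

theorem exists_suppNorm_le_one_inner_eq_gaugeNorm :
    ∃ v : EuclideanSpace ℝ (Fin d), suppNorm k v ≤ 1 ∧ ⟪y, v⟫ = gaugeNorm k y := by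
  obtain ⟨K, hK, hKy⟩ := exists_norm_restr_eq_gaugeNorm (k := k) y
  refine ⟨‖restr K y‖⁻¹ • restr K y, ?_, ?_⟩
  · refine (suppNorm_le_norm_of_restr_eq hK (by rw [restr_smul, restr_restr])).trans ?_
    rw [norm_smul, norm_inv, norm_norm]
    exact inv_mul_le_one_of_le₀ le_rfl (norm_nonneg _)
  · rw [real_inner_smul_right, inner_restr_self, sq, ← mul_assoc, inv_mul_mul_self, hKy]

end SuppNorm

section CapraConjL0

variable (y : EuclideanSpace ℝ (Fin d))

theorem le_capraConjL0 (l : Fin (d + 1)) : gaugeNorm l y - ((l : ℕ) : ℝ) ≤ capraConjL0 y :=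
  le_ciSup (f := fun l : Fin (d + 1) => gaugeNorm l y - ((l : ℕ) : ℝ))
    (Set.finite_range _).bddAbove l

theorem capraConjL0_nonneg : 0 ≤ capraConjL0 y := by
  simpa [gaugeNorm_zero_left] using le_capraConjL0 y 0

theorem capraConjL0_le_norm : capraConjL0 y ≤ ‖y‖ :=
  ciSup_le fun l => by linarith [gaugeNorm_le_norm (k := l) y, (l : ℕ).cast_nonneg (α := ℝ)]

theorem gaugeNorm_succ_le_capraConjL0_add (l : Fin d) :
    gaugeNorm ((l : ℕ) + 1) y ≤ capraConjL0 y + ((l : ℕ) + 1 : ℝ) := by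
  have := le_capraConjL0 y l.succ
  push_cast [Fin.val_succ] at this
  linarith

end CapraConjL0

variable (d) in
def admissibleTuples : Set (Fin d → EuclideanSpace ℝ (Fin d)) :=
  {t | ∑ l : Fin d, suppNorm ((l : ℕ) + 1) (t l) ≤ 1}

theorem sum_norm_le_one {t : Fin d → EuclideanSpace ℝ (Fin d)} (ht : t ∈ admissibleTuples d) :
    ∑ l, ‖t l‖ ≤ 1 :=
  (Finset.sum_le_sum fun l _ => norm_le_suppNorm (t l) l.1.succ_pos).trans ht

theorem convexOn_tupleVal : ConvexOn ℝ univ (tupleVal d) :=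
  convexOn_univ_sum_apply fun l => (convexOn_suppNorm l.1.succ_pos).smul (by positivity)

theorem continuous_tupleVal : Continuous (tupleVal d) :=
  continuousOn_univ.1 (convexOn_tupleVal.continuousOn isOpen_univ)

theorem convex_admissibleTuples : Convex ℝ (admissibleTuples d) := by
  simpa [admissibleTuples] using
    (convexOn_univ_sum_apply fun l : Fin d => convexOn_suppNorm l.1.succ_pos).convex_le 1

theorem isCompact_admissibleTuples : IsCompact (admissibleTuples d) := by
  refine Metric.isCompact_of_isClosed_isBounded ?_ ?_
  · exact isClosed_le (continuous_finsetSum _ fun l _ =>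
      (continuous_suppNorm l.1.succ_pos).comp (continuous_apply l)) continuous_const
  · refine (Metric.isBounded_closedBall (x := 0) (r := 1)).subset fun t ht => ?_
    rw [mem_closedBall_zero_iff, pi_norm_le_iff_of_nonneg zero_le_one]
    exact fun l => (Finset.single_le_sum (fun l _ => norm_nonneg (t l)) (Finset.mem_univ l)).trans
      (sum_norm_le_one ht)

theorem sum_suppNorm_pi_single (j : Fin d) (v : EuclideanSpace ℝ (Fin d)) (w : Fin d → ℝ) :
    ∑ l : Fin d, w l * suppNorm ((l : ℕ) + 1) ((Pi.single j v : Fin d → _) l) =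
      w j * suppNorm ((j : ℕ) + 1) v :=
  (Fintype.sum_eq_single j fun l hl => by
    simp [Pi.single_eq_of_ne hl, suppNorm_zero l.1.succ_pos]).trans (by simp)

theorem inner_sum_sub_capraConjL0_le_tupleVal {t : Fin d → EuclideanSpace ℝ (Fin d)}
    (ht : t ∈ admissibleTuples d) (y : EuclideanSpace ℝ (Fin d)) :
    ⟪∑ l, t l, y⟫ - capraConjL0 y ≤ tupleVal d t := by
  have hterm : ∀ l : Fin d, ⟪t l, y⟫ ≤
      suppNorm ((l : ℕ) + 1) (t l) * capraConjL0 y + (l + 1 : ℝ) * suppNorm ((l : ℕ) + 1) (t l) :=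
    fun l => calc
      ⟪t l, y⟫ = ⟪y, t l⟫ := real_inner_comm _ _
      _ ≤ gaugeNorm ((l : ℕ) + 1) y * suppNorm ((l : ℕ) + 1) (t l) :=
        inner_le_gaugeNorm_mul_suppNorm _ l.1.succ_pos _
      _ ≤ (capraConjL0 y + (l + 1 : ℝ)) * suppNorm ((l : ℕ) + 1) (t l) :=
        mul_le_mul_of_nonneg_right (gaugeNorm_succ_le_capraConjL0_add y l)
          (suppNorm_nonneg _ l.1.succ_pos)
      _ = _ := by ring
  have hsum := Finset.sum_le_sum fun l (_ : l ∈ Finset.univ) => hterm l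
  rw [← sum_inner, Finset.sum_add_distrib, ← Finset.sum_mul] at hsum
  have : (∑ l : Fin d, suppNorm ((l : ℕ) + 1) (t l)) * capraConjL0 y ≤ capraConjL0 y :=
    mul_le_of_le_one_left (capraConjL0_nonneg y) ht
  unfold tupleVal
  linarith

theorem exists_capraConjL0_le_inner_sum_sub_tupleVal (y : EuclideanSpace ℝ (Fin d)) :
    ∃ t ∈ admissibleTuples d, capraConjL0 y ≤ ⟪∑ l, t l, y⟫ - tupleVal d t := by
  obtain ⟨l, hl⟩ := exists_eq_ciSup_of_finite (f := fun l : Fin (d + 1) => gaugeNorm l y - l)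
  rcases Fin.eq_zero_or_eq_succ l with rfl | ⟨j, rfl⟩
  · refine ⟨0, by simp [admissibleTuples, suppNorm_zero], ?_⟩
    simp [capraConjL0, ← hl, gaugeNorm_zero_left, tupleVal, suppNorm_zero]
  · obtain ⟨v, hv, hyv⟩ := exists_suppNorm_le_one_inner_eq_gaugeNorm (k := j + 1) y
    have hadm : Pi.single j v ∈ admissibleTuples d := by
      simpa [admissibleTuples] using (sum_suppNorm_pi_single j v 1).trans_le (by simpa using hv)
    refine ⟨Pi.single j v, hadm, ?_⟩
    rw [capraConjL0, ← hl, Finset.sum_pi_single', if_pos (Finset.mem_univ j), real_inner_comm,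
      hyv, tupleVal, sum_suppNorm_pi_single]
    push_cast [Fin.val_succ]
    nlinarith [suppNorm_nonneg v j.1.succ_pos, (j : ℕ).cast_nonneg (α := ℝ)]

section L0

variable {x : EuclideanSpace ℝ (Fin d)}

theorem le_L0 (y : EuclideanSpace ℝ (Fin d)) : ((⟪x, y⟫ - capraConjL0 y : ℝ) : EReal) ≤ L0 x :=
  le_iSup (fun y => ((⟪x, y⟫ - capraConjL0 y : ℝ) : EReal)) y

theorem L0_le_tupleVal {t : Fin d → EuclideanSpace ℝ (Fin d)} (ht : Feasible d x t) :
    L0 x ≤ tupleVal d t :=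
  iSup_le fun y => EReal.coe_le_coe_iff.2 <| by
    simpa [ht.2] using inner_sum_sub_capraConjL0_le_tupleVal ht.1 y

theorem tupleVal_le_L0 {t₀ : Fin d → EuclideanSpace ℝ (Fin d)} (ht₀ : Feasible d x t₀)
    (hmin : ∀ t, Feasible d x t → tupleVal d t₀ ≤ tupleVal d t) :
    (tupleVal d t₀ : EReal) ≤ L0 x := by
  refine EReal.ge_of_forall_gt_iff_ge.1 fun m hm => ?_
  rw [EReal.coe_lt_coe_iff] at hm
  set S : (Fin d → EuclideanSpace ℝ (Fin d)) →ₗ[ℝ] EuclideanSpace ℝ (Fin d) :=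
    ∑ l, LinearMap.proj l
  have hS : ∀ t, S t = ∑ l, t l := fun t => by simp [S]
  set C := projEpigraph (admissibleTuples d) S (tupleVal d)
  have hxm : (x, m) ∉ C := fun ⟨t, ht, hx, hle⟩ =>
    (hmin t ⟨ht, (hS t).symm.trans hx⟩).not_gt (hle.trans_lt hm)
  obtain ⟨y, hy⟩ := exists_inner_sub_lt_of_notMem
    (convex_projEpigraph convex_admissibleTuples S
      (convexOn_tupleVal.subset (subset_univ _) convex_admissibleTuples))
    (isClosed_projEpigraph isCompact_admissibleTuples S.continuous_of_finiteDimensional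
      continuous_tupleVal.continuousOn)
    hxm ⟨t₀, ht₀.1, (hS t₀).trans ht₀.2, le_rfl⟩ hm
  obtain ⟨t, ht, hc⟩ := exists_capraConjL0_le_inner_sum_sub_tupleVal y
  have hlt := hy (S t, tupleVal d t) ⟨t, ht, rfl, le_rfl⟩
  rw [hS] at hlt
  exact (EReal.coe_le_coe_iff.2 (by linarith)).trans (le_L0 y)

theorem not_feasible_of_one_lt_norm (hx : 1 < ‖x‖) (t : Fin d → EuclideanSpace ℝ (Fin d)) :
    ¬ Feasible d x t := fun ht =>
  (hx.trans_le (ht.2 ▸ norm_sum_le _ _)).not_ge (sum_norm_le_one ht.1)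

theorem L0_eq_top (hx : 1 < ‖x‖) : L0 x = ⊤ := by
  refine (EReal.eq_top_iff_forall_lt _).2 fun r => ?_
  have hpos : 0 < ‖x‖ * (‖x‖ - 1) := by nlinarith
  obtain ⟨n, hn⟩ := exists_nat_gt (r / (‖x‖ * (‖x‖ - 1)))
  rw [div_lt_iff₀ hpos] at hn
  refine (EReal.coe_lt_coe_iff.2 ?_).trans_le (le_L0 ((n : ℝ) • x))
  have := capraConjL0_le_norm ((n : ℝ) • x)
  rw [norm_smul, Real.norm_natCast] at this
  rw [real_inner_smul_right, real_inner_self_eq_norm_sq]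
  nlinarith

theorem exists_feasible_of_norm_le_one (hx : ‖x‖ ≤ 1) : ∃ t, Feasible d x t := by
  cases d with
  | zero => exact ⟨0, by simp, Subsingleton.elim _ _⟩
  | succ n =>
    refine ⟨Pi.single (Fin.last n) x, ?_, by simp⟩
    have := sum_suppNorm_pi_single (Fin.last n) x 1
    simp only [Pi.one_apply, one_mul, Fin.val_last] at this
    rw [this]
    exact (suppNorm_le_norm_of_restr_eq (by simp) (restr_univ x)).trans hx

theorem exists_feasible_isMin_tupleVal (hx : ‖x‖ ≤ 1) :
    ∃ t₀, Feasible d x t₀ ∧ ∀ t, Feasible d x t → tupleVal d t₀ ≤ tupleVal d t :=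
  (isCompact_admissibleTuples.inter_right (isClosed_eq (continuous_finsetSum _ fun l _ =>
    continuous_apply l) continuous_const)).exists_isMinOn (exists_feasible_of_norm_le_one hx)
    continuous_tupleVal.continuousOn

end L0

theorem L0_eq_min_support_norms_general (d : ℕ) (x : EuclideanSpace ℝ (Fin d)) :
    L0 x = (⨅ t : Fin d → EuclideanSpace ℝ (Fin d), ⨅ _ : Feasible d x t,
        ((tupleVal d t : ℝ) : EReal)) ∧
      ((∃ t, Feasible d x t) →
        ∃ t, Feasible d x t ∧ ((tupleVal d t : ℝ) : EReal) = L0 x) := by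
  rcases le_or_gt ‖x‖ 1 with hx | hx
  · obtain ⟨t₀, ht₀, hmin⟩ := exists_feasible_isMin_tupleVal hx
    have hL0 : L0 x = tupleVal d t₀ := (L0_le_tupleVal ht₀).antisymm (tupleVal_le_L0 ht₀ hmin)
    refine ⟨le_antisymm (le_iInf₂ fun t ht => L0_le_tupleVal ht) ?_, fun _ => ⟨t₀, ht₀, hL0.symm⟩⟩
    rw [hL0]
    exact iInf₂_le t₀ ht₀
  · refine ⟨?_, fun ⟨t, ht⟩ => (not_feasible_of_one_lt_norm hx t ht).elim⟩
    rw [L0_eq_top hx, eq_comm, iInf₂_eq_top]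
    exact fun t ht => (not_feasible_of_one_lt_norm hx t ht).elim

/-- `L₀(x)` is the minimum of `Σ_{l=1}^{d} l · ‖x^{(l)}‖^sp_(l)` over all
tuples `(x^{(1)},…,x^{(d)})` with `Σ_l ‖x^{(l)}‖^sp_(l) ≤ 1` and `Σ_l x^{(l)} = x`
(the infimum in `ℝ̄` being `+∞` when no feasible tuple exists, and attained otherwise). -/
theorem L0_eq_min_support_norms (d : ℕ) (hd : 1 ≤ d) (x : EuclideanSpace ℝ (Fin d)) :
    L0 x = (⨅ t : Fin d → EuclideanSpace ℝ (Fin d), ⨅ _ : Feasible d x t,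
        ((tupleVal d t : ℝ) : EReal)) ∧
      ((∃ t, Feasible d x t) →
        ∃ t, Feasible d x t ∧ ((tupleVal d t : ℝ) : EReal) = L0 x) :=
  L0_eq_min_support_norms_general d x
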